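/- arXiv:2301.10751 — 3 statements merged into one kernel-verified Lean document; each statement's English description precedes it below -/
import Mathlib

section
/- An order-preserving map f : S → S' of finite nonempty totally ordered sets is cellular (i.e. f(succ s) ≤ succ(f(s)) for all non-maximal s ∈ S) if and only if the induced map of pointed finite sets ⟨|S'|-1⟩ → ⟨|S|-1⟩ under the functor Δᵒᵖ → Γᵒᵖ (sending [n] to ⟨n⟩ and φ : [n] → [m] to the map sending i to j if φ(j-1) < i ≤ φ(j), and to the basepoint otherwise) is semi-inert. -/
/-- Semi-inert pointed map: every non-basepoint element of the target has at
most one preimage.  `⟨n⟩` is modelled as `Option (Fin n)` with basepoint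
`none`. -/
def SemiInert {S T : Type} (t0 : T) (f : S → T) : Prop :=
  ∀ t : T, t ≠ t0 → ∀ s s' : S, f s = t → f s' = t → s = s'

open Classical in
/-- The functor `Δᵒᵖ → Γᵒᵖ` on morphisms: for `φ : [n] → [m]`, the pointed map
`underline φ : ⟨m⟩ → ⟨n⟩` sends `i` to `j` if `φ(j-1) < i ≤ φ(j)` and to the
basepoint otherwise.  Here the element `j` of `⟨n⟩` is encoded as `j : Fin n`,
corresponding to `j.succ`, `j.castSucc` in `[n] = Fin (n+1)`. -/
noncomputable def underline {n m : ℕ} (φ : Fin (n + 1) →o Fin (m + 1)) :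
    Option (Fin m) → Option (Fin n) := fun x =>
  x.bind fun i =>
    if h : ∃ j : Fin n, (φ j.castSucc : ℕ) < (i : ℕ) + 1 ∧ (i : ℕ) + 1 ≤ (φ j.succ : ℕ)
    then some h.choose else none

lemma underline_unique {n m : ℕ} (φ : Fin (n + 1) →o Fin (m + 1)) (i : Fin m)
    {j j' : Fin n}
    (hj : (φ j.castSucc : ℕ) < (i : ℕ) + 1 ∧ (i : ℕ) + 1 ≤ (φ j.succ : ℕ))
    (hj' : (φ j'.castSucc : ℕ) < (i : ℕ) + 1 ∧ (i : ℕ) + 1 ≤ (φ j'.succ : ℕ)) :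
    j = j' := by
  by_contra hne
  have key : ∀ a b : Fin n, (a : ℕ) < (b : ℕ) →
      (φ a.castSucc : ℕ) < (i : ℕ) + 1 ∧ (i : ℕ) + 1 ≤ (φ a.succ : ℕ) →
      (φ b.castSucc : ℕ) < (i : ℕ) + 1 ∧ (i : ℕ) + 1 ≤ (φ b.succ : ℕ) → False := by
    intro a b hab ha hb
    have hle : (a.succ : Fin (n + 1)) ≤ b.castSucc := by
      simp [Fin.le_def]
      omega
    have := φ.monotone hle
    have : (φ a.succ : ℕ) ≤ (φ b.castSucc : ℕ) := this
    omega
  rcases lt_or_gt_of_ne (Fin.val_ne_of_ne hne) with h | h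
  · exact key j j' h hj hj'
  · exact key j' j h hj' hj

open Classical in
lemma underline_some_iff {n m : ℕ} (φ : Fin (n + 1) →o Fin (m + 1)) (i : Fin m)
    (j : Fin n) :
    underline φ (some i) = some j ↔
      (φ j.castSucc : ℕ) < (i : ℕ) + 1 ∧ (i : ℕ) + 1 ≤ (φ j.succ : ℕ) := by
  simp only [underline, Option.bind_eq_bind, Option.bind_some]
  constructor
  · intro h
    split_ifs at h with hex
    · have hspec := hex.choose_spec
      have := Option.some_injective _ h
      rwa [this] at hspec
    

  · intro hj
    have hex : ∃ j : Fin n, (φ j.castSucc : ℕ) < (i : ℕ) + 1 ∧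
        (i : ℕ) + 1 ≤ (φ j.succ : ℕ) := ⟨j, hj⟩
    rw [dif_pos hex]
    exact congrArg some (underline_unique φ i hex.choose_spec hj)

/-- A monotone map `φ : [n] → [m]` is *cellular*, i.e.
`φ(succ j) ≤ succ (φ j)` for every non-maximal `j`, if and only if the induced
pointed map `⟨m⟩ → ⟨n⟩` is semi-inert. -/
theorem cellular_iff_semiInert {n m : ℕ} (φ : Fin (n + 1) →o Fin (m + 1)) :
    (∀ j : Fin n, (φ j.succ : ℕ) ≤ (φ j.castSucc : ℕ) + 1) ↔
      SemiInert (none : Option (Fin n)) (underline φ) := by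
  constructor
  · intro hc t ht s s' hs hs'
    match t, ht with
    | some j, _ =>
      match s, s' with
      | none, _ => simp [underline] at hs
      | some i, none => simp [underline] at hs'
      | some i, some i' =>
        rw [underline_some_iff] at hs hs'
        have := hc j
        have : (i : ℕ) = (i' : ℕ) := by omega
        exact congrArg some (Fin.ext this)
  · intro hsi j
    by_contra hlt
    push_neg at hlt
    set a : ℕ := (φ j.castSucc : ℕ) with ha
    have hb : (φ j.succ : ℕ) ≤ m := Nat.lt_succ_iff.mp (φ j.succ).isLt
    have hi1 : a + 1 < m + 1 := by omega
    have hi2 : a + 1 < m := by omega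
    have h1 : underline φ (some ⟨a, by omega⟩) = some j := by
      rw [underline_some_iff]; simp; omega
    have h2 : underline φ (some ⟨a + 1, hi2⟩) = some j := by
      rw [underline_some_iff]; simp; omega
    have := hsi (some j) (by simp) _ _ h1 h2
    simp at this
end

section
/- Let p : E → B be a cartesian fibration of categories and suppose B carries a factorisation system (L, R). Then E carries a factorisation system whose left class consists of morphisms lying over L and whose right class consists of p-cartesian morphisms lying over R. -/
open CategoryTheory

universe v u

variable {E B : Type u} [Category.{v} E] [Category.{v} B]

/-- `f` is `p`-cartesian: morphisms into its target factor uniquely through it,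
compatibly with any factorisation of their projections. -/
def IsCart (p : E ⥤ B) {X Y : E} (f : X ⟶ Y) : Prop :=
  ∀ (Z : E) (g : Z ⟶ Y) (u : p.obj Z ⟶ p.obj X),
    u ≫ p.map f = p.map g → ∃! h : Z ⟶ X, p.map h = u ∧ h ≫ f = g

/-- `p` is a cartesian fibration: every morphism into `p(Y)` admits a
`p`-cartesian lift with target `Y`. -/
def IsCartesianFibration (p : E ⥤ B) : Prop :=
  ∀ (Y : E) (b : B) (ψ : b ⟶ p.obj Y),
    ∃ (X : E) (f : X ⟶ Y) (hX : p.obj X = b),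
      IsCart p f ∧ p.map f = eqToHom hX ≫ ψ

/-- A factorisation system `(L, R)`: both classes contain isomorphisms and are
closed under composition, and every morphism factors as a map in `L` followed
by a map in `R`, uniquely up to unique isomorphism. -/
structure IsFactorisationSystem {C : Type u} [Category.{v} C]
    (L R : MorphismProperty C) : Prop where
  l_iso : ∀ {X Y : C} (f : X ⟶ Y), IsIso f → L f
  r_iso : ∀ {X Y : C} (f : X ⟶ Y), IsIso f → R f
  l_comp : ∀ {X Y Z : C} (f : X ⟶ Y) (g : Y ⟶ Z), L f → L g → L (f ≫ g)
  r_comp : ∀ {X Y Z : C} (f : X ⟶ Y) (g : Y ⟶ Z), R f → R g → R (f ≫ g)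
  fact : ∀ {X Y : C} (f : X ⟶ Y),
    ∃ (Z : C) (g : X ⟶ Z) (h : Z ⟶ Y), L g ∧ R h ∧ g ≫ h = f
  uniq : ∀ {X Y Z Z' : C} (f : X ⟶ Y) (g : X ⟶ Z) (h : Z ⟶ Y)
    (g' : X ⟶ Z') (h' : Z' ⟶ Y), L g → R h → L g' → R h' →
    g ≫ h = f → g' ≫ h' = f →
    ∃! e : Z ≅ Z', g ≫ e.hom = g' ∧ e.hom ≫ h' = h

/-- A cartesian fibration lifts a factorisation system `(L, R)` on the base to
one on the total category, whose left class consists of morphisms lying over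
`L` and whose right class consists of `p`-cartesian morphisms lying over `R`. -/
theorem cartesianFibration_lifts_factorisationSystem (p : E ⥤ B)
    (hp : IsCartesianFibration p) (L R : MorphismProperty B)
    (hLR : IsFactorisationSystem L R) :
    IsFactorisationSystem
      (fun _ _ f => L (p.map f) : MorphismProperty E)
      (fun _ _ f => IsCart p f ∧ R (p.map f) : MorphismProperty E) := by
  constructor
  · intro X Y f hf
    haveI := hf
    exact hLR.l_iso _ inferInstance
  · intro X Y f hf
    haveI := hf
    refine ⟨?_, hLR.r_iso _ inferInstance⟩
    intro Z g u hu
    refine ⟨g ≫ inv f, ⟨?_, by simp⟩, ?_⟩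
    · rw [Functor.map_comp, ← hu]
      simp
    · rintro h ⟨h1, h2⟩
      rw [← h2]; simp
  · intro X Y Z f g hf hg
    rw [Functor.map_comp]; exact hLR.l_comp _ _ hf hg
  · intro X Y Z f g hf hg
    refine ⟨?_, by rw [Functor.map_comp]; exact hLR.r_comp _ _ hf.2 hg.2⟩
    intro W k u hu
    obtain ⟨h₁, ⟨hp₁, hc₁⟩, hu₁⟩ := hg.1 W k (u ≫ p.map f)
      (by rw [Category.assoc, ← Functor.map_comp]; exact hu)
    obtain ⟨h, ⟨hp₂, hc₂⟩, hu₂⟩ := hf.1 W h₁ u hp₁.symm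
    refine ⟨h, ⟨hp₂, by rw [← Category.assoc, hc₂, hc₁]⟩, ?_⟩
    rintro h' ⟨hp', hc'⟩
    refine hu₂ h' ⟨hp', ?_⟩
    exact hu₁ (h' ≫ f) ⟨by rw [Functor.map_comp, hp'], by rw [Category.assoc]; exact hc'⟩
  · intro X Y f
    obtain ⟨M, l, r, hl, hr, hlr⟩ := hLR.fact (p.map f)
    obtain ⟨X', m, hX', hcart, hpm⟩ := hp Y M r
    have hcomp : (l ≫ eqToHom hX'.symm) ≫ p.map m = p.map f := by
      rw [hpm]; simp [hlr]
    obtain ⟨g, ⟨hpg, hgm⟩, _⟩ := hcart X f (l ≫ eqToHom hX'.symm) hcomp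
    refine ⟨X', g, m, ?_, ⟨hcart, ?_⟩, hgm⟩
    · rw [hpg]; exact hLR.l_comp _ _ hl (hLR.l_iso _ inferInstance)
    · rw [hpm]; exact hLR.r_comp _ _ (hLR.r_iso _ inferInstance) hr
  · intro X Y Z Z' f g h g' h' hg hh hg' hh' hfac hfac'
    obtain ⟨hcart, hR⟩ := hh
    obtain ⟨hcart', hR'⟩ := hh'
    have hfb : p.map g ≫ p.map h = p.map f := by rw [← Functor.map_comp, hfac]
    have hfb' : p.map g' ≫ p.map h' = p.map f := by rw [← Functor.map_comp, hfac']
    obtain ⟨ε, ⟨hε1, hε2⟩, hεu⟩ := hLR.uniq (p.map f) (p.map g) (p.map h)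
      (p.map g') (p.map h') hg hR hg' hR' hfb hfb'
    obtain ⟨k, ⟨hpk, hkh⟩, hku⟩ := hcart' Z h ε.hom hε2
    obtain ⟨k', ⟨hpk', hk'h⟩, _⟩ := hcart Z' h' ε.inv (by rw [← hε2]; simp)
    have hkk' : k ≫ k' = 𝟙 Z := by
      obtain ⟨w, _, hwu⟩ := hcart Z h (𝟙 _) (by simp)
      rw [hwu (k ≫ k') ⟨by rw [Functor.map_comp, hpk, hpk']; simp,
            by rw [Category.assoc, hk'h, hkh]⟩,
          hwu (𝟙 Z) ⟨by simp, by simp⟩]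
    have hk'k : k' ≫ k = 𝟙 Z' := by
      obtain ⟨w, _, hwu⟩ := hcart' Z' h' (𝟙 _) (by simp)
      rw [hwu (k' ≫ k) ⟨by rw [Functor.map_comp, hpk', hpk]; simp,
            by rw [Category.assoc, hkh, hk'h]⟩,
          hwu (𝟙 Z') ⟨by simp, by simp⟩]
    have hgk : g ≫ k = g' := by
      obtain ⟨w, _, hwu⟩ := hcart' X f (p.map g') (by rw [hfb'])
      rw [hwu (g ≫ k) ⟨by rw [Functor.map_comp, hpk, hε1],
            by rw [Category.assoc, hkh, hfac]⟩,
          hwu g' ⟨rfl, hfac'⟩]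
    refine ⟨⟨k, k', hkk', hk'k⟩, ⟨hgk, hkh⟩, ?_⟩
    rintro e ⟨he1, he2⟩
    have hmi : p.mapIso e = ε := hεu (p.mapIso e)
      ⟨by rw [Functor.mapIso_hom, ← Functor.map_comp, he1],
       by rw [Functor.mapIso_hom, ← Functor.map_comp, he2]⟩
    have hpe : p.map e.hom = ε.hom := by
      rw [← Functor.mapIso_hom, hmi]
    exact Iso.ext (hku e.hom ⟨hpe, he2⟩)
end

section
/- Let L : Cat → Grpd be the groupoidification functor (localisation at all morphisms), left adjoint to the inclusion I : Grpd → Cat. Then for any category C and groupoid G, there is a natural equivalence L(C × I(G)) ≃ L(C) × G. -/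
/-!
The unit `C ⥤ L C` of the adjunction is a localisation of `C` at all morphisms: to check
this it suffices (`Functor.IsLocalization.mk'`) to verify the strict universal property
for two targets, `L C` and the constructed localisation, and both are groupoids, for which
the universal property is exactly the adjunction. Products of localisations are
localisations and `𝟭 G` localises a groupoid at all its morphisms, so `η_C × 𝟭_G` and
`η_{C × G}` are two localisations of `C × G` at all morphisms; their targets are therefore
equivalent.
-/

open CategoryTheory

universe u

theorem CategoryTheory.MorphismProperty.top_prod_top (C₁ C₂ : Type*) [Category C₁]
    [Category C₂] : (⊤ : MorphismProperty C₁).prod (⊤ : MorphismProperty C₂) = ⊤ := by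
  ext
  simp [MorphismProperty.prod]

instance CategoryTheory.Functor.isLocalization_prod_id_top {C D : Type*} [Category C]
    [Category D] (F : C ⥤ D) [F.IsLocalization ⊤] (G : Type*) [Groupoid G] :
    (F.prod (𝟭 G)).IsLocalization ⊤ := by
  have : (𝟭 G).IsLocalization ⊤ := .for_id _ fun _ _ _ _ => inferInstance
  rw [← MorphismProperty.top_prod_top]
  infer_instance

namespace CategoryTheory.Adjunction

variable {L : Cat.{u, u} ⥤ Grpd.{u, u}} (adj : L ⊣ Grpd.forgetToCat)

/-- `(adj.unit.app C).toFunctor` itself has target `(L ⋙ Grpd.forgetToCat).obj C`, on which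
instance search does not see the groupoid structure. -/
def unitFunctor (C : Cat.{u, u}) : ↑C ⥤ ↑(L.obj C) := (adj.unit.app C).toFunctor

/-- `(adj.unit.app C).toFunctor` itself has target `(L ⋙ Grpd.forgetToCat).obj C`, on which
instance search does not see the groupoid structure. -/
def unitFunctorStrictUniversalPropertyFixedTarget (C : Cat.{u, u}) (H : Type u)
    [Groupoid.{u} H] :
    Localization.StrictUniversalPropertyFixedTarget (adj.unitFunctor C) ⊤ H where
  inverts _ _ _ _ := inferInstance
  lift F _ := (adj.homEquiv C (Grpd.of H)).symm F.toCatHom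
  fac F _ := by
    have h := (adj.homEquiv C (Grpd.of H)).apply_symm_apply F.toCatHom
    rw [homEquiv_unit] at h
    exact congrArg Cat.Hom.toFunctor h
  uniq F₁ F₂ h := (adj.homEquiv C (Grpd.of H)).injective <| by
    erw [homEquiv_unit, homEquiv_unit]
    exact Cat.Hom.ext h

instance isLocalization_unitFunctor (C : Cat.{u, u}) :
    (adj.unitFunctor C).IsLocalization ⊤ :=
  letI := Localization.groupoid (C := C)
  .mk' _ _ (adj.unitFunctorStrictUniversalPropertyFixedTarget C (L.obj C))
    (adj.unitFunctorStrictUniversalPropertyFixedTarget C _)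

-- `hF` is explicit so that it can be supplied up to defeq: on `Cat.of (C₁ × C₂)` instance
-- search does not find localisation instances stated for the product category `C₁ × C₂`.
theorem nonempty_equivalence_of_isLocalization_top (adj : L ⊣ Grpd.forgetToCat)
    (C : Cat.{u, u}) {D : Type*} [Category D] (F : ↑C ⥤ D) (hF : F.IsLocalization ⊤) :
    Nonempty (↑(L.obj C) ≌ D) :=
  ⟨Localization.uniq (adj.unitFunctor C) F ⊤⟩

end CategoryTheory.Adjunction

/-- Let `L : Cat → Grpd` be groupoidification, i.e. any left adjoint to the
inclusion `I : Grpd → Cat`.  Then for any category `C` and any groupoid `G`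
there is an equivalence `L(C × I(G)) ≃ L(C) × G`. -/
theorem groupoidification_preserves_product_with_groupoid
    (L : Cat.{u, u} ⥤ Grpd.{u, u}) (adj : L ⊣ Grpd.forgetToCat)
    (C : Cat.{u, u}) (G : Grpd.{u, u}) :
    Nonempty
      ((↑(L.obj (Cat.of (↑C × ↑(Grpd.forgetToCat.obj G)))) : Type u) ≌
        (↑(L.obj C) × ↑G)) :=
  adj.nonempty_equivalence_of_isLocalization_top _ ((adj.unitFunctor C).prod (𝟭 G))
    ((adj.unitFunctor C).isLocalization_prod_id_top G)
end
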